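/- Fix p ≥ q ≥ 1, a nonempty subset Π₀ of M₀ = {(p-i+1, p+i) : i=1,...,q}, and let B₁ = B₀ △ (⋃_{π∈Π₀} π) where B₀ = [p]. Let R = B₁ ∩ [p+1..p+q] and ℬ = {A ⊆ [p+q] : |A| = p, A ∩ [p+1..p+q] = R}. Define 𝒜 = {B₀} ∪ {A ∈ ℬ : Σ(A) - Σ(B₁) odd} and 𝒜' = {A ∈ ℬ : Σ(A) - Σ(B₁) even}. Then the pair 𝒜, 𝒜' is balanced: every matching M in [p+q] is a feasible matching for equally many members of 𝒜 as of 𝒜'. -/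

import Mathlib

/-!
Only matchings satisfying the `A`-independent conditions (`IsNestedMatching`) can be feasible,
and such a matching is feasible for `A` exactly when each of its arcs has one endpoint in `A`.
Every arc has odd endpoint sum, because the interval it spans is tiled by the arcs nested in it.
If some arc `π` lies in `[1, p]`, then `B₀` is infeasible and `A ↦ A △ π` is a parity-reversing
involution on the feasible members of `ℬ`. Otherwise every arc crosses from `[1, p]` into
`[p + 1, p + q]`, `B₀` is feasible, and the only feasible member of `ℬ` is `B₀` with the arcs
ending in `R` toggled. Both it and `B₁` arise from `B₀` by toggling `|R|` disjoint odd arcs, so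
`Σ(A) + Σ(B₁)` is even and both collections have exactly one feasible member.
-/

open Finset

/-- The two-element set of endpoints of an arc `π = (i,j)`. -/
def arcSet (π : ℕ × ℕ) : Finset ℕ := {π.1, π.2}

/-- `M` is a feasible matching for the `p`-subset `A` of `[p+q] = {1,…,p+q}`:
`q` pairwise disjoint nested arcs `(i,j)`, `i<j`, each containing exactly one element
of `A` and one of its complement, with no free element covered by an arc's interval. -/
def IsFeasibleMatching (p q : ℕ) (A : Finset ℕ) (M : Finset (ℕ × ℕ)) : Prop :=
  M.card = q ∧
  (∀ π ∈ M, 1 ≤ π.1 ∧ π.1 < π.2 ∧ π.2 ≤ p + q) ∧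
  (∀ π ∈ M, ∀ π' ∈ M, π ≠ π' → Disjoint (arcSet π) (arcSet π')) ∧
  (∀ π ∈ M, (arcSet π ∩ A).card = 1 ∧
            (arcSet π ∩ (Finset.Icc 1 (p + q) \ A)).card = 1) ∧
  (∀ π ∈ M, ∀ π' ∈ M,
      Disjoint (Finset.Icc π.1 π.2) (Finset.Icc π'.1 π'.2) ∨
      Finset.Icc π.1 π.2 ⊆ Finset.Icc π'.1 π'.2 ∨
      Finset.Icc π'.1 π'.2 ⊆ Finset.Icc π.1 π.2) ∧
  (∀ k ∈ Finset.Icc 1 (p + q), (∀ π ∈ M, k ∉ arcSet π) →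
      ∀ π ∈ M, k ∉ Finset.Icc π.1 π.2)

open Classical in
/-- The number of members of the collection `𝒜` for which `M` is a feasible matching. -/
noncomputable def feasCount (p q : ℕ) (𝒜 : Finset (Finset ℕ)) (M : Finset (ℕ × ℕ)) : ℕ :=
  (𝒜.filter (fun A => IsFeasibleMatching p q A M)).card

/-- Two collections of `p`-subsets of `[p+q]` are balanced if every matching is a
feasible matching for equally many members of each. -/
def BalancedPair (p q : ℕ) (𝒜 𝒜' : Finset (Finset ℕ)) : Prop :=
  ∀ M : Finset (ℕ × ℕ), feasCount p q 𝒜 M = feasCount p q 𝒜' M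

lemma Finset.sum_symmDiff_add_two_nsmul_sum_inter {ι M : Type*} [DecidableEq ι] [AddCommMonoid M]
    (s t : Finset ι) (f : ι → M) :
    ∑ x ∈ symmDiff s t, f x + 2 • ∑ x ∈ s ∩ t, f x = ∑ x ∈ s, f x + ∑ x ∈ t, f x := by
  have hdisj : Disjoint (symmDiff s t) (s ∩ t) := disjoint_symmDiff_inf s t
  have hunion : symmDiff s t ∪ s ∩ t = s ∪ t := symmDiff_sup_inf s t
  rw [← sum_union_inter, two_nsmul, ← add_assoc, ← sum_union hdisj, hunion]

lemma Finset.sum_symmDiff_modEq_two (s t : Finset ℕ) :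
    ∑ x ∈ symmDiff s t, x ≡ ∑ x ∈ s, x + ∑ x ∈ t, x [MOD 2] := by
  have h := sum_symmDiff_add_two_nsmul_sum_inter s t id
  simp only [id, smul_eq_mul] at h
  unfold Nat.ModEq
  omega

lemma Finset.card_symmDiff_add_two_mul_card_inter {ι : Type*} [DecidableEq ι] (s t : Finset ι) :
    #(symmDiff s t) + 2 * #(s ∩ t) = #s + #t := by
  have h := sum_symmDiff_add_two_nsmul_sum_inter s t fun _ => 1
  simpa only [← card_eq_sum_ones, smul_eq_mul] using h

lemma mem_arcSet {x : ℕ} {π : ℕ × ℕ} : x ∈ arcSet π ↔ x = π.1 ∨ x = π.2 := by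
  simp [arcSet]

lemma card_arcSet {π : ℕ × ℕ} (h : π.1 ≠ π.2) : #(arcSet π) = 2 := card_pair h

lemma sum_arcSet {π : ℕ × ℕ} (h : π.1 ≠ π.2) : ∑ x ∈ arcSet π, x = π.1 + π.2 := sum_pair h

lemma arcSet_subset_Icc {π : ℕ × ℕ} (h : π.1 ≤ π.2) : arcSet π ⊆ Icc π.1 π.2 := by
  intro x hx
  rcases mem_arcSet.mp hx with rfl | rfl <;> simp [h]

lemma card_arcSet_inter_eq_one_iff {π : ℕ × ℕ} (h : π.1 ≠ π.2) (A : Finset ℕ) :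
    #(arcSet π ∩ A) = 1 ↔ (π.1 ∈ A ↔ π.2 ∉ A) := by
  by_cases h1 : π.1 ∈ A <;> by_cases h2 : π.2 ∈ A <;> simp [arcSet, insert_inter_of_mem,
    insert_inter_of_notMem, h1, h2, h]

lemma card_arcSet_sdiff_eq_one_iff {π : ℕ × ℕ} (h : π.1 ≠ π.2) (A : Finset ℕ) :
    #(arcSet π \ A) = 1 ↔ (π.1 ∈ A ↔ π.2 ∉ A) := by
  have hle : #(arcSet π ∩ A) ≤ 2 := card_arcSet h ▸ card_le_card inter_subset_left
  rw [← card_arcSet_inter_eq_one_iff h, card_sdiff, inter_comm, card_arcSet h]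
  omega

lemma eq_of_mem_arcSet {T : Finset (ℕ × ℕ)} (hT : (T : Set (ℕ × ℕ)).PairwiseDisjoint arcSet)
    {π π' : ℕ × ℕ} (hπ : π ∈ T) (hπ' : π' ∈ T) {x : ℕ} (hx : x ∈ arcSet π)
    (hx' : x ∈ arcSet π') : π = π' :=
  by_contra fun hne => disjoint_left.mp (hT hπ hπ' hne) hx hx'

lemma injOn_fst {T : Finset (ℕ × ℕ)} (hT : (T : Set (ℕ × ℕ)).PairwiseDisjoint arcSet) :
    Set.InjOn Prod.fst (T : Set (ℕ × ℕ)) := fun _ hπ _ hπ' h =>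
  eq_of_mem_arcSet hT hπ hπ' (mem_arcSet.mpr (.inl rfl)) (mem_arcSet.mpr (.inl h))

lemma injOn_snd {T : Finset (ℕ × ℕ)} (hT : (T : Set (ℕ × ℕ)).PairwiseDisjoint arcSet) :
    Set.InjOn Prod.snd (T : Set (ℕ × ℕ)) := fun _ hπ _ hπ' h =>
  eq_of_mem_arcSet hT hπ hπ' (mem_arcSet.mpr (.inr rfl)) (mem_arcSet.mpr (.inr h))

lemma mem_biUnion_arcSet_iff {M T : Finset (ℕ × ℕ)}
    (hM : (M : Set (ℕ × ℕ)).PairwiseDisjoint arcSet) (hT : T ⊆ M) {π : ℕ × ℕ} (hπ : π ∈ M)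
    {x : ℕ} (hx : x ∈ arcSet π) : x ∈ T.biUnion arcSet ↔ π ∈ T := by
  refine ⟨fun h => ?_, fun h => mem_biUnion.mpr ⟨π, h, hx⟩⟩
  obtain ⟨π', hπ', hx'⟩ := mem_biUnion.mp h
  rwa [eq_of_mem_arcSet hM hπ (hT hπ') hx hx']

lemma sum_biUnion_arcSet_modEq_two {T : Finset (ℕ × ℕ)}
    (hT : (T : Set (ℕ × ℕ)).PairwiseDisjoint arcSet) (hodd : ∀ π ∈ T, Odd (π.1 + π.2)) :
    ∑ x ∈ T.biUnion arcSet, x ≡ #T [MOD 2] := by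
  have hsum : ∀ π ∈ T, ∑ x ∈ arcSet π, x = π.1 + π.2 := fun π hπ =>
    sum_arcSet fun h => by have := Nat.odd_iff.mp (hodd π hπ); omega
  rw [sum_biUnion hT, sum_congr rfl hsum, Nat.ModEq, sum_nat_mod,
    sum_congr rfl fun π hπ => Nat.odd_iff.mp (hodd π hπ)]
  simp

structure IsNestedMatching (p q : ℕ) (M : Finset (ℕ × ℕ)) : Prop where
  card_eq : #M = q
  bounds : ∀ π ∈ M, 1 ≤ π.1 ∧ π.1 < π.2 ∧ π.2 ≤ p + q
  pairwiseDisjoint : (M : Set (ℕ × ℕ)).PairwiseDisjoint arcSet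
  nested : ∀ π ∈ M, ∀ π' ∈ M,
    Disjoint (Icc π.1 π.2) (Icc π'.1 π'.2) ∨ Icc π.1 π.2 ⊆ Icc π'.1 π'.2 ∨
      Icc π'.1 π'.2 ⊆ Icc π.1 π.2
  notMem_Icc_of_free : ∀ k ∈ Icc 1 (p + q), (∀ π ∈ M, k ∉ arcSet π) →
    ∀ π ∈ M, k ∉ Icc π.1 π.2

def Separates (M : Finset (ℕ × ℕ)) (A : Finset ℕ) : Prop :=
  ∀ π ∈ M, (π.1 ∈ A ↔ π.2 ∉ A)

theorem isFeasibleMatching_iff {p q : ℕ} {A : Finset ℕ} {M : Finset (ℕ × ℕ)} :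
    IsFeasibleMatching p q A M ↔ IsNestedMatching p q M ∧ Separates M A := by
  have hsdiff : ∀ π : ℕ × ℕ, 1 ≤ π.1 ∧ π.1 < π.2 ∧ π.2 ≤ p + q →
      arcSet π ∩ (Icc 1 (p + q) \ A) = arcSet π \ A := fun π hb => by
    rw [← inter_sdiff_assoc, inter_eq_left.mpr ((arcSet_subset_Icc hb.2.1.le).trans
      (Icc_subset_Icc hb.1 hb.2.2))]
  constructor
  · rintro ⟨hcard, hb, hdisj, hsep, hnest, hfree⟩
    exact ⟨⟨hcard, hb, hdisj, hnest, hfree⟩, fun π hπ =>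
      (card_arcSet_inter_eq_one_iff (hb π hπ).2.1.ne A).mp (hsep π hπ).1⟩
  · rintro ⟨⟨hcard, hb, hdisj, hnest, hfree⟩, hsep⟩
    refine ⟨hcard, hb, hdisj, fun π hπ => ?_, hnest, hfree⟩
    rw [hsdiff π (hb π hπ), card_arcSet_inter_eq_one_iff (hb π hπ).2.1.ne,
      card_arcSet_sdiff_eq_one_iff (hb π hπ).2.1.ne]
    exact ⟨hsep π hπ, hsep π hπ⟩

section FeasCount

variable {p q : ℕ} {M : Finset (ℕ × ℕ)}

lemma feasCount_eq_zero_of_not_isNestedMatching (hM : ¬ IsNestedMatching p q M)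
    (𝒜 : Finset (Finset ℕ)) : feasCount p q 𝒜 M = 0 := by
  simp [feasCount, isFeasibleMatching_iff, hM]

open Classical in
lemma feasCount_eq_card_filter_separates (hM : IsNestedMatching p q M)
    (𝒜 : Finset (Finset ℕ)) : feasCount p q 𝒜 M = #(𝒜.filter (Separates M)) := by
  simp only [feasCount, isFeasibleMatching_iff, hM, true_and]

end FeasCount

namespace IsNestedMatching

variable {p q : ℕ} {M : Finset (ℕ × ℕ)}

lemma Icc_subset_Icc_of_mem_arcSet (hM : IsNestedMatching p q M) {π π' : ℕ × ℕ} (hπ : π ∈ M)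
    (hπ' : π' ∈ M) {k : ℕ} (hk : k ∈ Icc π.1 π.2) (hk' : k ∈ arcSet π') :
    Icc π'.1 π'.2 ⊆ Icc π.1 π.2 := by
  have hle := (hM.bounds π hπ).2.1.le
  have hle' := (hM.bounds π' hπ').2.1.le
  rcases hM.nested π' hπ' π hπ with hdisj | hsub | hsup
  · exact absurd hk (disjoint_left.mp hdisj (arcSet_subset_Icc hle' hk'))
  · exact hsub
  · -- `π'` encloses `π`, so the endpoint `k` of `π'` inside `[π.1, π.2]` is an endpoint of `π`
    rw [Icc_subset_Icc_iff hle] at hsup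
    have hkπ : k ∈ arcSet π := by
      rw [mem_Icc] at hk
      rcases mem_arcSet.mp hk' with rfl | rfl
      · exact mem_arcSet.mpr (.inl (by omega))
      · exact mem_arcSet.mpr (.inr (by omega))
    rw [eq_of_mem_arcSet hM.pairwiseDisjoint hπ' hπ hk' hkπ]

lemma Icc_eq_biUnion_arcSet (hM : IsNestedMatching p q M) {π : ℕ × ℕ} (hπ : π ∈ M) :
    Icc π.1 π.2 = (M.filter fun π' => Icc π'.1 π'.2 ⊆ Icc π.1 π.2).biUnion arcSet := by
  ext k
  simp only [mem_biUnion, mem_filter]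
  constructor
  · intro hk
    have hk_range : k ∈ Icc 1 (p + q) := by
      have := hM.bounds π hπ
      rw [mem_Icc] at hk ⊢
      omega
    by_contra! hfree
    refine hM.notMem_Icc_of_free k hk_range (fun π' hπ' hk' => ?_) π hπ hk
    exact hfree π' ⟨hπ', hM.Icc_subset_Icc_of_mem_arcSet hπ hπ' hk hk'⟩ hk'
  · rintro ⟨π', ⟨hπ', hsub⟩, hk'⟩
    exact hsub (arcSet_subset_Icc (hM.bounds π' hπ').2.1.le hk')

lemma odd_add (hM : IsNestedMatching p q M) {π : ℕ × ℕ} (hπ : π ∈ M) : Odd (π.1 + π.2) := by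
  set N := M.filter fun π' => Icc π'.1 π'.2 ⊆ Icc π.1 π.2
  have hcard : #(Icc π.1 π.2) = 2 * #N := by
    rw [hM.Icc_eq_biUnion_arcSet hπ,
      card_biUnion (hM.pairwiseDisjoint.subset (filter_subset _ M)),
      sum_congr rfl fun π' hπ' => card_arcSet (hM.bounds π' (mem_filter.mp hπ').1).2.1.ne,
      sum_const, smul_eq_mul, mul_comm]
  have hlt := (hM.bounds π hπ).2.1
  rw [Nat.card_Icc] at hcard
  rw [Nat.odd_iff]
  omega

lemma mem_of_forall_notMem_arcSet (hM : IsNestedMatching p q M) {A : Finset ℕ}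
    (hA : A ⊆ Icc 1 (p + q)) (hcard : #A = p) (hsep : Separates M A) {k : ℕ}
    (hk : k ∈ Icc 1 (p + q)) (hfree : ∀ π ∈ M, k ∉ arcSet π) : k ∈ A := by
  -- the `q` arcs have `q` distinct endpoints outside `A`, which exhausts the complement of `A`
  set D := M.biUnion fun π => arcSet π \ A
  have hD : D ⊆ Icc 1 (p + q) \ A := biUnion_subset.mpr fun π hπ => by
    have hb := hM.bounds π hπ
    exact sdiff_subset_sdiff ((arcSet_subset_Icc hb.2.1.le).trans (Icc_subset_Icc hb.1 hb.2.2))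
      le_rfl
  have hDcard : #D = q := by
    rw [card_biUnion (hM.pairwiseDisjoint.mono_on fun _ _ => sdiff_subset),
      sum_congr rfl fun π hπ =>
        (card_arcSet_sdiff_eq_one_iff (hM.bounds π hπ).2.1.ne A).mpr (hsep π hπ)]
    simp [hM.card_eq]
  have hcompl : D = Icc 1 (p + q) \ A := eq_of_subset_of_card_le hD (by
    rw [card_sdiff_of_subset hA, hcard, Nat.card_Icc, hDcard]
    omega)
  by_contra hkA
  obtain ⟨π, hπ, hkπ⟩ := mem_biUnion.mp (hcompl ▸ mem_sdiff.mpr ⟨hk, hkA⟩)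
  exact hfree π hπ (mem_sdiff.mp hkπ).1

lemma eq_of_inter_eq (hM : IsNestedMatching p q M) {A A' S : Finset ℕ}
    (hA : A ⊆ Icc 1 (p + q)) (hA' : A' ⊆ Icc 1 (p + q)) (hcard : #A = p) (hcard' : #A' = p)
    (hsep : Separates M A) (hsep' : Separates M A') (hS : ∀ π ∈ M, π.2 ∈ S)
    (htrace : A ∩ S = A' ∩ S) : A = A' := by
  have hmem2 : ∀ π ∈ M, (π.2 ∈ A ↔ π.2 ∈ A') := fun π hπ => by
    simpa [hS π hπ] using congrArg (π.2 ∈ ·) htrace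
  ext x
  by_cases hx : x ∈ Icc 1 (p + q)
  · by_cases hfree : ∀ π ∈ M, x ∉ arcSet π
    · exact iff_of_true (hM.mem_of_forall_notMem_arcSet hA hcard hsep hx hfree)
        (hM.mem_of_forall_notMem_arcSet hA' hcard' hsep' hx hfree)
    · push Not at hfree
      obtain ⟨π, hπ, hxπ⟩ := hfree
      rcases mem_arcSet.mp hxπ with rfl | rfl
      · rw [hsep π hπ, hsep' π hπ, hmem2 π hπ]
      · exact hmem2 π hπ
  · exact iff_of_false (fun h => hx (hA h)) (fun h => hx (hA' h))

lemma image_snd_eq_Icc (hM : IsNestedMatching p q M) (hup : ∀ π ∈ M, p < π.2) :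
    M.image Prod.snd = Icc (p + 1) (p + q) := by
  refine eq_of_subset_of_card_le (fun x hx => ?_) ?_
  · obtain ⟨π, hπ, rfl⟩ := mem_image.mp hx
    have := hM.bounds π hπ
    have := hup π hπ
    rw [mem_Icc]
    omega
  · rw [card_image_of_injOn (injOn_snd hM.pairwiseDisjoint), hM.card_eq, Nat.card_Icc]
    omega

lemma fst_le (hM : IsNestedMatching p q M) (hup : ∀ π ∈ M, p < π.2) {π : ℕ × ℕ}
    (hπ : π ∈ M) : π.1 ≤ p := by
  by_contra! hp
  have hb := hM.bounds π hπ
  have hfst : π.1 ∈ M.image Prod.snd := by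
    rw [hM.image_snd_eq_Icc hup, mem_Icc]
    omega
  obtain ⟨π', hπ', hπ'π⟩ := mem_image.mp hfst
  have := eq_of_mem_arcSet hM.pairwiseDisjoint hπ hπ' (mem_arcSet.mpr (.inl rfl))
    (mem_arcSet.mpr (.inr hπ'π.symm))
  subst this
  omega

end IsNestedMatching

def IsCrossing (p q : ℕ) (π : ℕ × ℕ) : Prop :=
  1 ≤ π.1 ∧ π.1 ≤ p ∧ p < π.2 ∧ π.2 ≤ p + q

section CrossingArcs

variable {p q : ℕ} {T : Finset (ℕ × ℕ)}

lemma Icc_inter_biUnion_arcSet (hT : ∀ π ∈ T, IsCrossing p q π) :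
    Icc 1 p ∩ T.biUnion arcSet = T.image Prod.fst := by
  ext x
  simp only [mem_inter, mem_biUnion, mem_arcSet, mem_image, mem_Icc]
  constructor
  · rintro ⟨hx, π, hπ, hxπ⟩
    have := hT π hπ
    exact ⟨π, hπ, by unfold IsCrossing at this; omega⟩
  · rintro ⟨π, hπ, rfl⟩
    have := hT π hπ
    exact ⟨⟨this.1, this.2.1⟩, π, hπ, .inl rfl⟩

lemma symmDiff_Icc_biUnion_arcSet_inter_Icc (hT : ∀ π ∈ T, IsCrossing p q π) :
    symmDiff (Icc 1 p) (T.biUnion arcSet) ∩ Icc (p + 1) (p + q) = T.image Prod.snd := by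
  ext x
  simp only [mem_inter, mem_symmDiff, mem_biUnion, mem_arcSet, mem_image, mem_Icc]
  constructor
  · rintro ⟨⟨hx, -⟩ | ⟨⟨π, hπ, hxπ⟩, -⟩, hx'⟩
    · omega
    · have := hT π hπ
      exact ⟨π, hπ, by unfold IsCrossing at this; omega⟩
  · rintro ⟨π, hπ, rfl⟩
    have := hT π hπ
    unfold IsCrossing at this
    exact ⟨.inr ⟨⟨π, hπ, .inr rfl⟩, by omega⟩, by omega⟩

lemma symmDiff_Icc_biUnion_arcSet_subset (hT : ∀ π ∈ T, IsCrossing p q π) :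
    symmDiff (Icc 1 p) (T.biUnion arcSet) ⊆ Icc 1 (p + q) := by
  refine symmDiff_le_sup.trans (union_subset (Icc_subset_Icc_right (by omega))
    (biUnion_subset.mpr fun π hπ x hx => ?_))
  have := hT π hπ
  unfold IsCrossing at this
  rw [mem_Icc]
  rcases mem_arcSet.mp hx with rfl | rfl <;> omega

lemma card_symmDiff_Icc_biUnion_arcSet (hT : ∀ π ∈ T, IsCrossing p q π)
    (hdisj : (T : Set (ℕ × ℕ)).PairwiseDisjoint arcSet) :
    #(symmDiff (Icc 1 p) (T.biUnion arcSet)) = p := by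
  have hunion : #(T.biUnion arcSet) = 2 * #T := by
    rw [card_biUnion hdisj, sum_congr rfl fun π hπ => card_arcSet (by
      have := hT π hπ; unfold IsCrossing at this; omega), sum_const, smul_eq_mul, mul_comm]
  have h := card_symmDiff_add_two_mul_card_inter (Icc 1 p) (T.biUnion arcSet)
  rw [Icc_inter_biUnion_arcSet hT, card_image_of_injOn (injOn_fst hdisj), hunion,
    Nat.card_Icc] at h
  omega

lemma sum_symmDiff_Icc_biUnion_arcSet_modEq (hT : ∀ π ∈ T, IsCrossing p q π)
    (hdisj : (T : Set (ℕ × ℕ)).PairwiseDisjoint arcSet) (hodd : ∀ π ∈ T, Odd (π.1 + π.2)) :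
    ∑ x ∈ symmDiff (Icc 1 p) (T.biUnion arcSet), x ≡
      ∑ x ∈ Icc 1 p, x + #(symmDiff (Icc 1 p) (T.biUnion arcSet) ∩ Icc (p + 1) (p + q))
      [MOD 2] := by
  rw [symmDiff_Icc_biUnion_arcSet_inter_Icc hT, card_image_of_injOn (injOn_snd hdisj)]
  exact (sum_symmDiff_modEq_two _ _).trans
    (Nat.ModEq.add_left _ (sum_biUnion_arcSet_modEq_two hdisj hodd))

end CrossingArcs

def centredArcs (p q : ℕ) : Finset (ℕ × ℕ) := (Icc 1 q).image fun i => (p - i + 1, p + i)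

lemma isCrossing_of_mem_centredArcs {p q : ℕ} (hpq : q ≤ p) {π : ℕ × ℕ}
    (hπ : π ∈ centredArcs p q) :
    IsCrossing p q π ∧ Odd (π.1 + π.2) := by
  obtain ⟨i, hi, rfl⟩ := mem_image.mp hπ
  rw [mem_Icc] at hi
  refine ⟨by unfold IsCrossing; omega, ⟨p, by omega⟩⟩

lemma pairwiseDisjoint_centredArcs {p q : ℕ} (hpq : q ≤ p) :
    (centredArcs p q : Set (ℕ × ℕ)).PairwiseDisjoint arcSet := by
  simp only [centredArcs, coe_image, Set.PairwiseDisjoint, Set.Pairwise, Set.mem_image, mem_coe,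
    mem_Icc]
  rintro _ ⟨i, hi, rfl⟩ _ ⟨j, hj, rfl⟩ hij
  refine disjoint_left.mpr fun x hx hx' => hij ?_
  rw [mem_arcSet] at hx hx'
  ext <;> dsimp only <;> omega

lemma sum_symmDiff_Icc_biUnion_centredArcs_modEq {p q : ℕ} (hpq : q ≤ p)
    {P : Finset (ℕ × ℕ)} (hP : P ⊆ centredArcs p q) :
    ∑ x ∈ symmDiff (Icc 1 p) (P.biUnion arcSet), x ≡
      ∑ x ∈ Icc 1 p, x + #(symmDiff (Icc 1 p) (P.biUnion arcSet) ∩ Icc (p + 1) (p + q))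
      [MOD 2] :=
  sum_symmDiff_Icc_biUnion_arcSet_modEq (fun _ hπ => (isCrossing_of_mem_centredArcs hpq (hP hπ)).1)
    ((pairwiseDisjoint_centredArcs hpq).subset hP)
    fun _ hπ => (isCrossing_of_mem_centredArcs hpq (hP hπ)).2

def setsWithTop (p q : ℕ) (R : Finset ℕ) : Finset (Finset ℕ) :=
  (Icc 1 (p + q)).powerset.filter fun A => A.card = p ∧ A ∩ Icc (p + 1) (p + q) = R

lemma mem_setsWithTop {p q : ℕ} {R A : Finset ℕ} :
    A ∈ setsWithTop p q R ↔ A ⊆ Icc 1 (p + q) ∧ #A = p ∧ A ∩ Icc (p + 1) (p + q) = R := by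
  simp [setsWithTop]

lemma Separates.symmDiff_arcSet {M : Finset (ℕ × ℕ)} {A : Finset ℕ}
    (hdisj : (M : Set (ℕ × ℕ)).PairwiseDisjoint arcSet) (hsep : Separates M A) {π : ℕ × ℕ}
    (hπ : π ∈ M) (hne : π.1 ≠ π.2) : Separates M (symmDiff A (arcSet π)) := by
  intro π' hπ'
  by_cases h : π' = π
  · subst h
    have h1 : π'.1 ∈ arcSet π' := mem_arcSet.mpr (.inl rfl)
    have h2 : π'.2 ∈ arcSet π' := mem_arcSet.mpr (.inr rfl)
    have := hsep π' hπ'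
    rw [mem_symmDiff, mem_symmDiff]
    tauto
  · have hout : ∀ x ∈ arcSet π', x ∉ arcSet π := fun x hx => disjoint_left.mp (hdisj hπ' hπ h) hx
    simp only [mem_symmDiff, hout _ (mem_arcSet.mpr (.inl rfl)),
      hout _ (mem_arcSet.mpr (.inr rfl)), not_false_eq_true, and_true, false_and, or_false]
    exact hsep π' hπ'

lemma symmDiff_arcSet_mem_setsWithTop {p q : ℕ} {R A : Finset ℕ} {π : ℕ × ℕ} (h1 : 1 ≤ π.1)
    (hlt : π.1 < π.2) (hle : π.2 ≤ p) (hA : A ∈ setsWithTop p q R)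
    (hsep : π.1 ∈ A ↔ π.2 ∉ A) : symmDiff A (arcSet π) ∈ setsWithTop p q R := by
  obtain ⟨hsub, hcard, htop⟩ := mem_setsWithTop.mp hA
  have harc : arcSet π ⊆ Icc 1 p := (arcSet_subset_Icc hlt.le).trans (Icc_subset_Icc h1 hle)
  refine mem_setsWithTop.mpr ⟨symmDiff_le_sup.trans (union_subset hsub
    (harc.trans (Icc_subset_Icc_right (by omega)))), ?_, ?_⟩
  · have h := card_symmDiff_add_two_mul_card_inter A (arcSet π)
    rw [inter_comm, (card_arcSet_inter_eq_one_iff hlt.ne A).mpr hsep, card_arcSet hlt.ne,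
      hcard] at h
    omega
  · have hoff : arcSet π ∩ Icc (p + 1) (p + q) = ∅ :=
      disjoint_iff_inter_eq_empty.mp (disjoint_of_subset_left harc (by
        rw [disjoint_left]; simp only [mem_Icc]; omega))
    rw [← htop, ← inf_eq_inter, inf_symmDiff_distrib_right, inf_eq_inter, inf_eq_inter, hoff,
      ← bot_eq_empty, symmDiff_bot]

lemma card_filter_odd_eq_card_filter_not_odd (S : Finset (Finset ℕ)) {s : Finset ℕ}
    (hs : Odd (∑ x ∈ s, x)) (hS : ∀ A ∈ S, symmDiff A s ∈ S) (c : ℕ) :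
    #(S.filter fun A => Odd ((∑ a ∈ A, a) + c)) =
      #(S.filter fun A => ¬ Odd ((∑ a ∈ A, a) + c)) := by
  have hflip : ∀ A : Finset ℕ,
      Odd ((∑ a ∈ symmDiff A s, a) + c) ↔ ¬ Odd ((∑ a ∈ A, a) + c) := fun A => by
    have h := sum_symmDiff_modEq_two A s
    rw [Nat.odd_iff] at hs
    simp only [Nat.odd_iff]
    unfold Nat.ModEq at h
    omega
  refine card_bij' (fun A _ => symmDiff A s) (fun A _ => symmDiff A s) (fun A hA => ?_)
    (fun A hA => ?_) (fun A _ => symmDiff_symmDiff_cancel_right s A)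
    (fun A _ => symmDiff_symmDiff_cancel_right s A) <;>
  · rw [mem_filter] at hA ⊢
    exact ⟨hS A hA.1, by rw [hflip]; tauto⟩

section LowArc

variable {p q : ℕ} {M : Finset (ℕ × ℕ)} {π : ℕ × ℕ}

lemma not_separates_Icc (hM : IsNestedMatching p q M) (hπ : π ∈ M) (hle : π.2 ≤ p) :
    ¬ Separates M (Icc 1 p) := fun h => by
  have := h π hπ
  have := hM.bounds π hπ
  simp only [mem_Icc] at *
  omega

open Classical in
lemma card_filter_odd_eq_card_filter_not_odd_of_snd_le (hM : IsNestedMatching p q M)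
    (hπ : π ∈ M) (hle : π.2 ≤ p) (R : Finset ℕ) (c : ℕ) :
    #(((setsWithTop p q R).filter (Separates M)).filter fun A => Odd ((∑ a ∈ A, a) + c)) =
      #(((setsWithTop p q R).filter (Separates M)).filter
        fun A => ¬ Odd ((∑ a ∈ A, a) + c)) := by
  have hb := hM.bounds π hπ
  refine card_filter_odd_eq_card_filter_not_odd _ (sum_arcSet hb.2.1.ne ▸ hM.odd_add hπ)
    (fun A hA => ?_) c
  rw [mem_filter] at hA ⊢
  exact ⟨symmDiff_arcSet_mem_setsWithTop hb.1 hb.2.1 hle hA.1 (hA.2 π hπ),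
    hA.2.symmDiff_arcSet hM.pairwiseDisjoint hπ hb.2.1.ne⟩

end LowArc

section CrossingMatching

variable {p q : ℕ} {M : Finset (ℕ × ℕ)}

lemma separates_Icc (hM : IsNestedMatching p q M) (hup : ∀ π ∈ M, p < π.2) :
    Separates M (Icc 1 p) := fun π hπ => by
  have := hM.bounds π hπ
  have := hM.fst_le hup hπ
  have := hup π hπ
  simp only [mem_Icc]
  omega

open Classical in
/-- The witness is `[1, p]` with the arcs ending in `R` toggled. -/
lemma exists_filter_separates_setsWithTop_eq_singleton (hM : IsNestedMatching p q M)
    (hup : ∀ π ∈ M, p < π.2) {R : Finset ℕ} (hR : R ⊆ Icc (p + 1) (p + q)) :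
    ∃ A, (setsWithTop p q R).filter (Separates M) = {A} ∧
      ∑ x ∈ A, x ≡ ∑ x ∈ Icc 1 p, x + #R [MOD 2] := by
  set T := M.filter fun π => π.2 ∈ R
  have hTM : T ⊆ M := filter_subset _ M
  have hT : ∀ π ∈ T, IsCrossing p q π := fun π hπ => by
    have := hM.bounds π (hTM hπ)
    exact ⟨this.1, hM.fst_le hup (hTM hπ), hup π (hTM hπ), this.2.2⟩
  have hdisj : (T : Set (ℕ × ℕ)).PairwiseDisjoint arcSet := hM.pairwiseDisjoint.subset hTM
  set A := symmDiff (Icc 1 p) (T.biUnion arcSet)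
  have htop : A ∩ Icc (p + 1) (p + q) = R := by
    rw [symmDiff_Icc_biUnion_arcSet_inter_Icc hT]
    ext x
    simp only [mem_image, mem_filter, T]
    refine ⟨fun ⟨π, ⟨_, hπR⟩, hπx⟩ => hπx ▸ hπR, fun hx => ?_⟩
    obtain ⟨π, hπ, rfl⟩ := mem_image.mp ((hM.image_snd_eq_Icc hup).symm ▸ hR hx)
    exact ⟨π, ⟨hπ, hx⟩, rfl⟩
  have hsep : Separates M A := fun π hπ => by
    have h1 : π.1 ∈ Icc 1 p := mem_Icc.mpr ⟨(hM.bounds π hπ).1, hM.fst_le hup hπ⟩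
    have h2 : π.2 ∉ Icc 1 p := fun h => by have := hup π hπ; rw [mem_Icc] at h; omega
    rw [mem_symmDiff, mem_symmDiff, mem_biUnion_arcSet_iff hM.pairwiseDisjoint hTM hπ
      (mem_arcSet.mpr (.inl rfl)), mem_biUnion_arcSet_iff hM.pairwiseDisjoint hTM hπ
      (mem_arcSet.mpr (.inr rfl))]
    tauto
  have hA : A ∈ setsWithTop p q R := mem_setsWithTop.mpr
    ⟨symmDiff_Icc_biUnion_arcSet_subset hT, card_symmDiff_Icc_biUnion_arcSet hT hdisj, htop⟩
  refine ⟨A, ?_, htop ▸ sum_symmDiff_Icc_biUnion_arcSet_modEq hT hdisj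
    fun π hπ => hM.odd_add (hTM hπ)⟩
  ext A'
  simp only [mem_filter, mem_singleton]
  refine ⟨fun ⟨hA', hsep'⟩ => ?_, fun h => h ▸ ⟨hA, hsep⟩⟩
  obtain ⟨hsub', hcard', htop'⟩ := mem_setsWithTop.mp hA'
  obtain ⟨hsub, hcard, -⟩ := mem_setsWithTop.mp hA
  exact hM.eq_of_inter_eq hsub' hsub hcard' hcard hsep' hsep (fun π hπ => by
    have := hM.bounds π hπ; have := hup π hπ; rw [mem_Icc]; omega) (htop'.trans htop.symm)

end CrossingMatching

theorem stmt9_general (p q : ℕ) (hpq : q ≤ p)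
    (P0 : Finset (ℕ × ℕ))
    (hP0 : P0 ⊆ (Finset.Icc 1 q).image (fun i => (p - i + 1, p + i)))
    (B0 B1 R : Finset ℕ) (ℬ : Finset (Finset ℕ))
    (hB0 : B0 = Finset.Icc 1 p)
    (hB1 : B1 = symmDiff B0 (P0.biUnion arcSet))
    (hR : R = B1 ∩ Finset.Icc (p + 1) (p + q))
    (hℬ : ℬ = (Finset.Icc 1 (p + q)).powerset.filter
        (fun A => A.card = p ∧ A ∩ Finset.Icc (p + 1) (p + q) = R)) :
    BalancedPair p q
      (insert B0 (ℬ.filter (fun A => Odd ((∑ a ∈ A, a) + ∑ b ∈ B1, b))))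
      (ℬ.filter (fun A => ¬ Odd ((∑ a ∈ A, a) + ∑ b ∈ B1, b))) := by
  classical
  intro M
  by_cases hM : IsNestedMatching p q M
  swap
  · simp only [feasCount_eq_zero_of_not_isNestedMatching hM]
  replace hℬ : ℬ = setsWithTop p q R := hℬ
  subst hB0 hℬ
  rw [feasCount_eq_card_filter_separates hM, feasCount_eq_card_filter_separates hM,
    filter_insert, filter_comm, filter_comm _ (Separates M)]
  by_cases hlow : ∃ π ∈ M, π.2 ≤ p
  · obtain ⟨π, hπ, hle⟩ := hlow
    rw [if_neg (not_separates_Icc hM hπ hle)]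
    exact card_filter_odd_eq_card_filter_not_odd_of_snd_le hM hπ hle R _
  · push Not at hlow
    obtain ⟨A, hfilter, hsumA⟩ :=
      exists_filter_separates_setsWithTop_eq_singleton hM hlow (hR ▸ inter_subset_right)
    have hsumB1 : ∑ x ∈ B1, x ≡ ∑ x ∈ Icc 1 p, x + #R [MOD 2] := by
      rw [hR, hB1]
      exact sum_symmDiff_Icc_biUnion_centredArcs_modEq hpq hP0
    have heven : ¬ Odd ((∑ a ∈ A, a) + ∑ b ∈ B1, b) := by
      unfold Nat.ModEq at hsumA hsumB1
      rw [Nat.odd_iff]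
      omega
    rw [if_pos (separates_Icc hM hlow), hfilter, filter_singleton, filter_singleton,
      if_neg heven, if_pos heven, insert_empty, card_singleton, card_singleton]

/-- For a nonempty `Π₀ ⊆ M₀ = {(p-i+1,p+i) : i=1,…,q}`, with `B₀ = [p]`,
`B₁ = B₀ △ ⋃Π₀`, `R = B₁ ∩ [p+1..p+q]`, and
`ℬ = {A ⊆ [p+q] : |A| = p, A ∩ [p+1..p+q] = R}`, the collections
`𝒜 = {B₀} ∪ {A ∈ ℬ : Σ(A) - Σ(B₁) odd}` and `𝒜' = {A ∈ ℬ : Σ(A) - Σ(B₁) even}`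
are balanced.  (Parity of `Σ(A) - Σ(B₁)` is expressed via parity of `Σ(A) + Σ(B₁)`.) -/
theorem stmt9 (p q : ℕ) (hq : 1 ≤ q) (hpq : q ≤ p)
    (P0 : Finset (ℕ × ℕ))
    (hP0 : P0 ⊆ (Finset.Icc 1 q).image (fun i => (p - i + 1, p + i)))
    (hP0ne : P0.Nonempty)
    (B0 B1 R : Finset ℕ) (ℬ : Finset (Finset ℕ))
    (hB0 : B0 = Finset.Icc 1 p)
    (hB1 : B1 = symmDiff B0 (P0.biUnion arcSet))
    (hR : R = B1 ∩ Finset.Icc (p + 1) (p + q))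
    (hℬ : ℬ = (Finset.Icc 1 (p + q)).powerset.filter
        (fun A => A.card = p ∧ A ∩ Finset.Icc (p + 1) (p + q) = R)) :
    BalancedPair p q
      (insert B0 (ℬ.filter (fun A => Odd ((∑ a ∈ A, a) + ∑ b ∈ B1, b))))
      (ℬ.filter (fun A => ¬ Odd ((∑ a ∈ A, a) + ∑ b ∈ B1, b))) :=
  stmt9_general p q hpq P0 hP0 B0 B1 R ℬ hB0 hB1 hR hℬ
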